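/- arXiv:1510.01697 — 2 statements merged into one kernel-verified Lean document; each statement's English description precedes it below -/
import Mathlib

section
/- Let q > 1 and ε be real numbers and let d ≥ 2 and a be integers with 0 ≤ a ≤ d−1. Then: (a) λ_1^a = −C_q(d−1,a) · q^{binom(d−a−1,2) + (d−a−1)ε}; (b) λ_d^a = (−1)^{d−a} · C_q(d−1,a) · q^{binom(d−a,2)}; (c) λ_{d−1}^a = (−1)^{d−1+a} · C_q(d−2,a) · q^{binom(d−a−1,2) + ε} + (−1)^{d+a} · C_q(d−2,a−1) · q^{binom(d−a,2)}. -/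
/-- The Gaussian binomial coefficient `C_q(n,k)` for a real `q > 1` and integers `n, k`:
`∏_{i=1}^{k} (q^{n−i+1} − 1)/(q^i − 1)` if `0 ≤ k ≤ n`, and `0` otherwise. -/
noncomputable def gaussBinom (q : ℝ) (n k : ℤ) : ℝ :=
  if 0 ≤ k ∧ k ≤ n then
    ∏ i ∈ Finset.Icc (1 : ℤ) k, (q ^ (n - i + 1) - 1) / (q ^ i - 1)
  else 0

/-- `binom(m,2) = m(m−1)/2`, as a real number. -/
noncomputable def binom2 (m : ℤ) : ℝ := ((m * (m - 1) : ℤ) : ℝ) / 2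

/-- `A(r,s,a) := C_q(d−r,s) q^{binom(d−r−s,2) + (d−r−s)ε} C_q(r−1, a−s) q^{binom(r−a+s,2)}`. -/
noncomputable def Aval (q ε : ℝ) (d r s a : ℤ) : ℝ :=
  gaussBinom q (d - r) s * q ^ (binom2 (d - r - s) + ((d - r - s : ℤ) : ℝ) * ε) *
    gaussBinom q (r - 1) (a - s) * q ^ binom2 (r - a + s)

/-- `λ_r^a := (−1)^{r+a} Σ_{s=max(a−r+1,0)}^{min(a,d−r)} (−1)^s A(r,s,a)`. -/
noncomputable def lamVal (q ε : ℝ) (d r a : ℤ) : ℝ :=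
  (-1 : ℝ) ^ (r + a) *
    ∑ s ∈ Finset.Icc (max (a - r + 1) 0) (min a (d - r)),
      (-1 : ℝ) ^ s * Aval q ε d r s a

lemma gB_zero (q : ℝ) {n : ℤ} (hn : 0 ≤ n) : gaussBinom q n 0 = 1 := by
  simp [gaussBinom, hn]

lemma gB_neg (q : ℝ) {n k : ℤ} (h : ¬ (0 ≤ k ∧ k ≤ n)) : gaussBinom q n k = 0 := by
  simp [gaussBinom, h]

lemma gB_one_one {q : ℝ} (hq : 1 < q) : gaussBinom q 1 1 = 1 := by
  have h1 : q - 1 ≠ 0 := by intro h; nlinarith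
  simp [gaussBinom, Finset.Icc_self, div_self h1]

lemma binom2_zero : binom2 0 = 0 := by simp [binom2]
lemma binom2_one : binom2 1 = 0 := by simp [binom2]

lemma neg_one_zpow_two_mul (a : ℤ) : (-1 : ℝ) ^ (2 * a) = 1 := by
  rw [zpow_mul]; norm_num

theorem stmt7 (q ε : ℝ) (hq : 1 < q) (d a : ℤ) (hd : 2 ≤ d)
    (ha : 0 ≤ a) (had : a ≤ d - 1) :
    lamVal q ε d 1 a
        = -(gaussBinom q (d - 1) a * q ^ (binom2 (d - a - 1) + ((d - a - 1 : ℤ) : ℝ) * ε)) ∧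
    lamVal q ε d d a
        = (-1 : ℝ) ^ (d - a) * gaussBinom q (d - 1) a * q ^ binom2 (d - a) ∧
    lamVal q ε d (d - 1) a
        = (-1 : ℝ) ^ (d - 1 + a) * gaussBinom q (d - 2) a *
            q ^ (binom2 (d - a - 1) + ε)
          + (-1 : ℝ) ^ (d + a) * gaussBinom q (d - 2) (a - 1) * q ^ binom2 (d - a) := by
  have hq0 : (0 : ℝ) < q := lt_trans one_pos hq
  have hne : (-1 : ℝ) ≠ 0 := by norm_num
  refine ⟨?_, ?_, ?_⟩
  · -- r = 1
    unfold lamVal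
    have h1 : max (a - 1 + 1) 0 = a := by omega
    have h2 : min a (d - 1) = a := by omega
    rw [h1, h2, Finset.Icc_self, Finset.sum_singleton]
    have hA : Aval q ε d 1 a a
        = gaussBinom q (d - 1) a * q ^ (binom2 (d - a - 1) + ((d - a - 1 : ℤ) : ℝ) * ε) := by
      unfold Aval
      have e1 : d - 1 - a = d - a - 1 := by ring
      have e2 : a - a = 0 := by ring
      have e3 : (1 : ℤ) - a + a = 1 := by ring
      rw [e1, e2, e3, gB_zero q (by norm_num), binom2_one, Real.rpow_zero]
      ring
    rw [hA, ← mul_assoc, ← zpow_add₀ hne]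
    have e4 : 1 + a + a = 2 * a + 1 := by ring
    rw [e4, zpow_add₀ hne, neg_one_zpow_two_mul]
    norm_num
  · -- r = d
    unfold lamVal
    have h1 : max (a - d + 1) 0 = 0 := by omega
    have h2 : min a (d - d) = 0 := by omega
    rw [h1, h2, Finset.Icc_self, Finset.sum_singleton]
    have hA : Aval q ε d d 0 a = gaussBinom q (d - 1) a * q ^ binom2 (d - a) := by
      unfold Aval
      have e1 : d - d = 0 := by ring
      have e2 : d - d - 0 = 0 := by ring
      have e3 : a - 0 = a := by ring
      have e4 : d - a + 0 = d - a := by ring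
      rw [e2, e3, e4, e1, gB_zero q le_rfl, binom2_zero]
      push_cast
      norm_num
    rw [hA, zpow_zero, one_mul]
    have e5 : d + a = (d - a) + 2 * a := by ring
    rw [e5, zpow_add₀ hne, neg_one_zpow_two_mul, mul_one, mul_assoc]
  · -- r = d - 1
    unfold lamVal
    -- evaluate the two possible summands
    have hA0 : (a ≤ d - 2) → Aval q ε d (d - 1) 0 a
        = gaussBinom q (d - 2) a * q ^ (binom2 (d - a - 1) + ε) := by
      intro _
      unfold Aval
      have e1 : d - (d - 1) = 1 := by ring
      have e2 : d - (d - 1) - 0 = 1 := by ring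
      have e3 : a - 0 = a := by ring
      have e4 : d - 1 - 1 = d - 2 := by ring
      have e5 : d - 1 - a + 0 = d - a - 1 := by ring
      rw [e2, e3, e4, e5, e1, gB_zero q (by norm_num), binom2_one]
      push_cast
      simp only [Real.rpow_add hq0, Real.rpow_zero, one_mul, mul_one]
      ring
    have hA1 : (1 ≤ a) → Aval q ε d (d - 1) 1 a
        = gaussBinom q (d - 2) (a - 1) * q ^ binom2 (d - a) := by
      intro _
      unfold Aval
      have e1 : d - (d - 1) = 1 := by ring
      have e2 : d - (d - 1) - 1 = 0 := by ring
      have e4 : d - 1 - 1 = d - 2 := by ring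
      have e5 : d - 1 - a + 1 = d - a := by ring
      rw [e2, e4, e5, e1, gB_one_one hq, binom2_zero]
      push_cast
      norm_num
    have hsign : (-1 : ℝ) ^ (d - 1 + a) * (-1 : ℝ) = (-1 : ℝ) ^ (d + a) := by
      have : d + a = (d - 1 + a) + 1 := by ring
      rw [this, zpow_add_one₀ hne]
    rcases eq_or_lt_of_le ha with h0 | h1
    · -- a = 0
      have haz : a = 0 := h0.symm
      subst haz
      have h1 : max (0 - (d - 1) + 1) 0 = 0 := by omega
      have h2 : min 0 (d - (d - 1)) = 0 := by omega
      rw [h1, h2, Finset.Icc_self, Finset.sum_singleton, zpow_zero, one_mul]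
      rw [hA0 (by omega)]
      rw [gB_neg q (n := d - 2) (k := (0:ℤ) - 1) (by omega)]
      ring
    · rcases eq_or_lt_of_le had with hd1 | hd2
      · -- a = d - 1
        have h1 : max (a - (d - 1) + 1) 0 = 1 := by omega
        have h2 : min a (d - (d - 1)) = 1 := by omega
        rw [h1, h2, Finset.Icc_self, Finset.sum_singleton, zpow_one]
        rw [hA1 (by omega)]
        rw [gB_neg q (n := d - 2) (k := a) (by omega), ← hsign]
        ring
      · -- 1 ≤ a ≤ d - 2
        have h1 : max (a - (d - 1) + 1) 0 = 0 := by omega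
        have h2 : min a (d - (d - 1)) = 1 := by omega
        rw [h1, h2]
        have hIcc : Finset.Icc (0 : ℤ) 1 = {0, 1} := rfl
        rw [hIcc, Finset.sum_insert (by decide), Finset.sum_singleton]
        rw [zpow_zero, one_mul, zpow_one]
        rw [hA0 (by omega), hA1 (by omega), ← hsign]
        ring
end

section
/- Let q ≥ 3 be a real number, ε ∈ {0, 1/2, 1, 3/2, 2}, and d, r, a integers with d ≥ 2, r > 0, and 0 ≤ a ≤ d−1. Then for every integer s with max(a−r+1, 0) ≤ s ≤ min(a, d−r) − 1: (a) if 2s + ε − a ≥ 1/2, then A(r,s,a) > A(r,s+1,a); (b) if 2s + ε − a ≤ −1/2, then A(r,s,a) < A(r,s+1,a). In particular, the finite sequence (A(r,s,a))_{max(a−r+1,0) ≤ s ≤ min(a,d−r)} is unimodal. -/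
lemma myOneLtZpow {q : ℝ} (hq : 1 < q) {m : ℤ} (hm : 1 ≤ m) : 1 < q ^ m := by
  calc (1:ℝ) < q := hq
  _ = q ^ (1:ℤ) := (zpow_one q).symm
  _ ≤ q ^ m := zpow_le_zpow_right₀ (le_of_lt hq) hm

lemma gaussBinom_pos {q : ℝ} (hq : 1 < q) {n k : ℤ} (h0 : 0 ≤ k) (hkn : k ≤ n) :
    0 < gaussBinom q n k := by
  rw [gaussBinom, if_pos ⟨h0, hkn⟩]
  apply Finset.prod_pos
  intro i hi
  rw [Finset.mem_Icc] at hi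
  have h1 : (1:ℝ) < q ^ i := myOneLtZpow hq hi.1
  have h2 : (1:ℝ) < q ^ (n - i + 1) := myOneLtZpow hq (by omega)
  apply div_pos <;> linarith

lemma gaussBinom_succ {q : ℝ} (hq : 1 < q) {n k : ℤ} (h0 : 0 ≤ k) (h : k + 1 ≤ n) :
    gaussBinom q n (k + 1) = gaussBinom q n k * ((q ^ (n - k) - 1) / (q ^ (k + 1) - 1)) := by
  rw [gaussBinom, gaussBinom, if_pos ⟨by omega, h⟩, if_pos ⟨h0, by omega⟩]
  have hins : Finset.Icc (1:ℤ) (k+1) = insert (k+1) (Finset.Icc 1 k) := by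
    ext x; simp [Finset.mem_Icc]; omega
  rw [hins, Finset.prod_insert (by simp)]
  have : n - (k + 1) + 1 = n - k := by ring
  rw [this, mul_comm]

lemma sqrt32 {q : ℝ} (hq : 3 ≤ q) : (3/2 : ℝ) < q ^ ((1:ℝ)/2) := by
  have hq0 : (0:ℝ) < q := by linarith
  have h2 : (q ^ ((1:ℝ)/2))^2 = q := by
    rw [← Real.rpow_natCast (q ^ ((1:ℝ)/2)) 2, ← Real.rpow_mul (le_of_lt hq0)]
    norm_num
  have hp : 0 < q ^ ((1:ℝ)/2) := Real.rpow_pos_of_pos hq0 _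
  nlinarith

lemma rpow_lt_23 {q : ℝ} (hq : 3 ≤ q) {e : ℝ} (he : e ≤ -(1/2)) : q ^ e < 2/3 := by
  have hq0 : (0:ℝ) < q := by linarith
  have h3 : q ^ e * q ^ ((1:ℝ)/2) ≤ 1 := by
    rw [← Real.rpow_add hq0]
    calc q ^ (e + 1/2) ≤ q ^ (0:ℝ) := Real.rpow_le_rpow_of_exponent_le (by linarith) (by linarith)
    _ = 1 := Real.rpow_zero q
  have h12 := sqrt32 hq
  have hpe : 0 < q ^ e := Real.rpow_pos_of_pos hq0 _
  nlinarith

lemma rpow_gt_32 {q : ℝ} (hq : 3 ≤ q) {e : ℝ} (he : (1/2:ℝ) ≤ e) : (3/2 : ℝ) < q ^ e := by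
  have h12 := sqrt32 hq
  calc (3/2:ℝ) < q ^ ((1:ℝ)/2) := h12
  _ ≤ q ^ e := Real.rpow_le_rpow_of_exponent_le (by linarith) (by linarith)

lemma zpow_neg_bounds {q : ℝ} (hq : 3 ≤ q) {m : ℤ} (hm : 1 ≤ m) :
    0 < q ^ (-m) ∧ q ^ (-m) ≤ 1/3 := by
  have hq0 : (0:ℝ) < q := by linarith
  refine ⟨zpow_pos hq0 _, ?_⟩
  calc q ^ (-m) ≤ q ^ (-1 : ℤ) := zpow_le_zpow_right₀ (by linarith) (by omega)
  _ = q⁻¹ := zpow_neg_one q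
  _ ≤ 1/3 := by rw [inv_le_comm₀ hq0 (by norm_num)]; linarith

lemma key_expand {q : ℝ} (hq : 3 ≤ q) (u v w x : ℤ) (e : ℝ) :
    (q ^ u - 1) * (q ^ v - 1) * q ^ ((((w + x - u - v : ℤ)) : ℝ) + e)
      = ((1 - q ^ (-u)) * (1 - q ^ (-v)) * q ^ e) * (q ^ w * q ^ x) := by
  have hq0 : (0:ℝ) < q := by linarith
  have hqne : q ≠ 0 := ne_of_gt hq0
  rw [Real.rpow_add hq0, Real.rpow_intCast,
    show w + x - u - v = (-u) + (-v) + (w + x) by ring,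
    zpow_add₀ hqne, zpow_add₀ hqne, zpow_add₀ hqne, zpow_neg, zpow_neg]
  field_simp

lemma key_expand2 {q : ℝ} (hq : 3 ≤ q) (w x : ℤ) :
    (q ^ w - 1) * (q ^ x - 1) = ((1 - q ^ (-w)) * (1 - q ^ (-x))) * (q ^ w * q ^ x) := by
  have hq0 : (0:ℝ) < q := by linarith
  have hqne : q ≠ 0 := ne_of_gt hq0
  rw [zpow_neg, zpow_neg]
  field_simp

lemma key_lt {q : ℝ} (hq : 3 ≤ q) {u v w x : ℤ} (hu : 1 ≤ u) (hv : 1 ≤ v) (hw : 1 ≤ w)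
    (hx : 1 ≤ x) {e : ℝ} (he : e ≤ -(1/2)) (hvw : v ≤ w) :
    (q ^ u - 1) * (q ^ v - 1) * q ^ ((((w + x - u - v : ℤ)) : ℝ) + e)
      < (q ^ w - 1) * (q ^ x - 1) := by
  have hq0 : (0:ℝ) < q := by linarith
  rw [key_expand hq, key_expand2 hq]
  apply mul_lt_mul_of_pos_right _ (mul_pos (zpow_pos hq0 _) (zpow_pos hq0 _))
  obtain ⟨hA0, hA1⟩ := zpow_neg_bounds hq hu
  obtain ⟨hB0, hB1⟩ := zpow_neg_bounds hq hv
  obtain ⟨hC0, hC1⟩ := zpow_neg_bounds hq hw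
  obtain ⟨hD0, hD1⟩ := zpow_neg_bounds hq hx
  have hCB : q ^ (-w) ≤ q ^ (-v) := zpow_le_zpow_right₀ (by linarith) (by omega)
  have hE : q ^ e < 2/3 := rpow_lt_23 hq he
  have hE0 : 0 < q ^ e := Real.rpow_pos_of_pos hq0 _
  have s1 : (1 - q ^ (-u)) * (1 - q ^ (-v)) * q ^ e ≤ (1 - q ^ (-v)) * q ^ e := by
    nlinarith [mul_nonneg hA0.le (mul_nonneg (by linarith : (0:ℝ) ≤ 1 - q ^ (-v)) hE0.le)]
  have s2 : (1 - q ^ (-v)) * q ^ e ≤ (1 - q ^ (-w)) * q ^ e := by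
    nlinarith
  have s3 : (1 - q ^ (-w)) * q ^ e < (1 - q ^ (-w)) * (2/3) := by
    nlinarith
  have s4 : (1 - q ^ (-w)) * (2/3) ≤ (1 - q ^ (-w)) * (1 - q ^ (-x)) := by
    nlinarith
  linarith

lemma key_gt {q : ℝ} (hq : 3 ≤ q) {u v w x : ℤ} (hu : 1 ≤ u) (hv : 1 ≤ v) (hw : 1 ≤ w)
    (hx : 1 ≤ x) {e : ℝ} (he : (1/2:ℝ) ≤ e) (hwv : w ≤ v) :
    (q ^ w - 1) * (q ^ x - 1)
      < (q ^ u - 1) * (q ^ v - 1) * q ^ ((((w + x - u - v : ℤ)) : ℝ) + e) := by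
  have hq0 : (0:ℝ) < q := by linarith
  rw [key_expand hq, key_expand2 hq]
  apply mul_lt_mul_of_pos_right _ (mul_pos (zpow_pos hq0 _) (zpow_pos hq0 _))
  obtain ⟨hA0, hA1⟩ := zpow_neg_bounds hq hu
  obtain ⟨hB0, hB1⟩ := zpow_neg_bounds hq hv
  obtain ⟨hC0, hC1⟩ := zpow_neg_bounds hq hw
  obtain ⟨hD0, hD1⟩ := zpow_neg_bounds hq hx
  have hBC : q ^ (-v) ≤ q ^ (-w) := zpow_le_zpow_right₀ (by linarith) (by omega)
  have hE : (3/2:ℝ) < q ^ e := rpow_gt_32 hq he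
  have hE0 : 0 < q ^ e := Real.rpow_pos_of_pos hq0 _
  have s1 : (1 - q ^ (-w)) * (1 - q ^ (-x)) ≤ (1 - q ^ (-w)) := by
    nlinarith [mul_nonneg (by linarith : (0:ℝ) ≤ 1 - q ^ (-w)) hD0.le]
  have s2 : (1 - q ^ (-w)) ≤ (1 - q ^ (-v)) := by linarith
  have s3 : (1 - q ^ (-v)) < ((2:ℝ)/3) * (1 - q ^ (-v)) * q ^ e := by
    nlinarith [mul_pos (show (0:ℝ) < 1 - q ^ (-v) by linarith) hE0]
  have s4 : ((2:ℝ)/3) * (1 - q ^ (-v)) * q ^ e ≤ (1 - q ^ (-u)) * (1 - q ^ (-v)) * q ^ e := by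
    nlinarith [mul_nonneg (by linarith : (0:ℝ) ≤ 1 - q ^ (-v)) hE0.le]
  linarith

lemma Aval_pos {q : ℝ} (hq : 1 < q) (ε : ℝ) {d r s a : ℤ} (h1 : 0 ≤ s) (h2 : s ≤ d - r)
    (h3 : s ≤ a) (h4 : a - r + 1 ≤ s) : 0 < Aval q ε d r s a := by
  have hq0 : (0:ℝ) < q := by linarith
  exact mul_pos (mul_pos (mul_pos (gaussBinom_pos hq h1 h2) (Real.rpow_pos_of_pos hq0 _))
    (gaussBinom_pos hq (by omega) (by omega))) (Real.rpow_pos_of_pos hq0 _)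

lemma Aval_succ {q : ℝ} (hq : 1 < q) (ε : ℝ) {d r s a : ℤ}
    (hs0 : 0 ≤ s) (hsd : s + 1 ≤ d - r) (hsa : s + 1 ≤ a) (hsr : a - r + 1 ≤ s) :
    Aval q ε d r (s+1) a * ((q ^ (s+1) - 1) * (q ^ (r-a+s) - 1))
      = Aval q ε d r s a * ((q ^ (d-r-s) - 1) * (q ^ (a-s) - 1)
          * q ^ (((((s+1) + (r-a+s) - (d-r-s) - (a-s) : ℤ)) : ℝ)
              + ((a : ℝ) - 2*(s:ℝ) - ε))) := by
  have hq0 : (0:ℝ) < q := by linarith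
  have G1 : gaussBinom q (d-r) (s+1)
      = gaussBinom q (d-r) s * ((q ^ (d-r-s) - 1) / (q ^ (s+1) - 1)) :=
    gaussBinom_succ hq hs0 hsd
  have G2 : gaussBinom q (r-1) (a-s)
      = gaussBinom q (r-1) (a-s-1) * ((q ^ (r-a+s) - 1) / (q ^ (a-s) - 1)) := by
    have := gaussBinom_succ hq (q := q) (n := r-1) (k := a-s-1) (by omega) (by omega)
    rw [show a-s-1+1 = a-s by ring, show r-1-(a-s-1) = r-a+s by ring] at this
    exact this
  have R1 : q ^ (binom2 (d-r-(s+1)) + ((d-r-(s+1) : ℤ) : ℝ) * ε)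
      = q ^ (binom2 (d-r-s) + ((d-r-s : ℤ) : ℝ) * ε) * q ^ (-(((d-r-s-1 : ℤ)) : ℝ) - ε) := by
    rw [← Real.rpow_add hq0]
    congr 1
    unfold binom2
    push_cast
    ring
  have R2 : q ^ (binom2 (r-a+(s+1))) = q ^ (binom2 (r-a+s)) * q ^ (((r-a+s : ℤ)) : ℝ) := by
    rw [← Real.rpow_add hq0]
    congr 1
    unfold binom2
    push_cast
    ring
  have R3 : q ^ (((((s+1) + (r-a+s) - (d-r-s) - (a-s) : ℤ)) : ℝ) + ((a : ℝ) - 2*(s:ℝ) - ε))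
      = q ^ (-(((d-r-s-1 : ℤ)) : ℝ) - ε) * q ^ (((r-a+s : ℤ)) : ℝ) := by
    rw [← Real.rpow_add hq0]
    congr 1
    push_cast
    ring
  have hw : (1:ℝ) < q ^ (s+1) := myOneLtZpow hq (by omega)
  have hv : (1:ℝ) < q ^ (a-s) := myOneLtZpow hq (by omega)
  rw [Aval, Aval, show a - (s+1) = a-s-1 by ring, G1, G2, R1, R2, R3]
  have hwne : q ^ (s+1) - 1 ≠ 0 := by linarith
  have hvne : q ^ (a-s) - 1 ≠ 0 := by linarith
  field_simp

lemma stmt_step {q ε : ℝ} (hq : 3 ≤ q) (hε0 : 0 ≤ ε) (hε2 : ε ≤ 2) {d r s a : ℤ}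
    (h1 : 0 ≤ s) (h2 : s + 1 ≤ d - r) (h3 : s + 1 ≤ a) (h4 : a - r + 1 ≤ s) :
    ((1 / 2 : ℝ) ≤ 2 * (s : ℝ) + ε - (a : ℝ) →
      Aval q ε d r (s + 1) a < Aval q ε d r s a) ∧
    (2 * (s : ℝ) + ε - (a : ℝ) ≤ -(1 / 2 : ℝ) →
      Aval q ε d r s a < Aval q ε d r (s + 1) a) := by
  have hq1 : (1:ℝ) < q := by linarith
  have key := Aval_succ hq1 ε h1 h2 h3 h4
  have hP : 0 < (q ^ (s+1) - 1) * (q ^ (r-a+s) - 1) := by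
    have := myOneLtZpow hq1 (show (1:ℤ) ≤ s+1 by omega)
    have := myOneLtZpow hq1 (show (1:ℤ) ≤ r-a+s by omega)
    nlinarith
  have hAs : 0 < Aval q ε d r s a := Aval_pos hq1 ε h1 (by omega) (by omega) h4
  constructor
  · intro hc
    have he : (a : ℝ) - 2*(s:ℝ) - ε ≤ -(1/2) := by linarith
    have hvw : a - s ≤ s + 1 := by
      have hcast : ((a - 2*s : ℤ) : ℝ) < 2 := by push_cast; linarith
      have : (a - 2*s : ℤ) < 2 := by exact_mod_cast hcast
      omega
    have hlt := key_lt hq (u := d-r-s) (v := a-s) (w := s+1) (x := r-a+s)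
      (by omega) (by omega) (by omega) (by omega) he hvw
    have h5 : Aval q ε d r (s+1) a * ((q ^ (s+1) - 1) * (q ^ (r-a+s) - 1))
        < Aval q ε d r s a * ((q ^ (s+1) - 1) * (q ^ (r-a+s) - 1)) := by
      rw [key]
      exact mul_lt_mul_of_pos_left hlt hAs
    exact lt_of_mul_lt_mul_right h5 hP.le
  · intro hc
    have he : (1/2:ℝ) ≤ (a : ℝ) - 2*(s:ℝ) - ε := by linarith
    have hwv : s + 1 ≤ a - s := by
      have hcast : (0:ℝ) < ((a - 2*s : ℤ) : ℝ) := by push_cast; linarith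
      have : (0:ℤ) < a - 2*s := by exact_mod_cast hcast
      omega
    have hlt := key_gt hq (u := d-r-s) (v := a-s) (w := s+1) (x := r-a+s)
      (by omega) (by omega) (by omega) (by omega) he hwv
    have h5 : Aval q ε d r s a * ((q ^ (s+1) - 1) * (q ^ (r-a+s) - 1))
        < Aval q ε d r (s+1) a * ((q ^ (s+1) - 1) * (q ^ (r-a+s) - 1)) := by
      rw [key]
      exact mul_lt_mul_of_pos_left hlt hAs
    exact lt_of_mul_lt_mul_right h5 hP.le

lemma chain_up {f : ℤ → ℝ} {lo hi : ℤ}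
    (h : ∀ s : ℤ, lo ≤ s → s + 1 ≤ hi → f s ≤ f (s+1)) :
    ∀ s₁ s₂ : ℤ, lo ≤ s₁ → s₁ ≤ s₂ → s₂ ≤ hi → f s₁ ≤ f s₂ := by
  intro s₁ s₂ h1 h2 h3
  obtain ⟨n, rfl⟩ : ∃ n : ℕ, s₂ = s₁ + n := ⟨(s₂ - s₁).toNat, by omega⟩
  clear h2
  induction n with
  | zero => simp
  | succ n ih =>
    have hc : s₁ + ((n+1 : ℕ) : ℤ) = (s₁ + n) + 1 := by push_cast; ring
    rw [hc] at h3 ⊢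
    exact le_trans (ih (by omega)) (h (s₁ + n) (by omega) h3)

lemma chain_down {f : ℤ → ℝ} {lo hi : ℤ}
    (h : ∀ s : ℤ, lo ≤ s → s + 1 ≤ hi → f (s+1) ≤ f s) :
    ∀ s₁ s₂ : ℤ, lo ≤ s₁ → s₁ ≤ s₂ → s₂ ≤ hi → f s₂ ≤ f s₁ := by
  intro s₁ s₂ h1 h2 h3
  obtain ⟨n, rfl⟩ : ∃ n : ℕ, s₂ = s₁ + n := ⟨(s₂ - s₁).toNat, by omega⟩
  clear h2
  induction n with
  | zero => simp
  | succ n ih =>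
    have hc : s₁ + ((n+1 : ℕ) : ℤ) = (s₁ + n) + 1 := by push_cast; ring
    rw [hc] at h3 ⊢
    exact le_trans (h (s₁ + n) (by omega) h3) (ih (by omega))

theorem stmt10 (q ε : ℝ) (hq : 3 ≤ q)
    (hε : ε ∈ ({0, 1/2, 1, 3/2, 2} : Set ℝ))
    (d r a : ℤ) (hd : 2 ≤ d) (hr : 0 < r) (ha : 0 ≤ a) (had : a ≤ d - 1) :
    (∀ s : ℤ, max (a - r + 1) 0 ≤ s → s ≤ min a (d - r) - 1 →
      ((1 / 2 : ℝ) ≤ 2 * (s : ℝ) + ε - (a : ℝ) →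
        Aval q ε d r (s + 1) a < Aval q ε d r s a) ∧
      (2 * (s : ℝ) + ε - (a : ℝ) ≤ -(1 / 2 : ℝ) →
        Aval q ε d r s a < Aval q ε d r (s + 1) a)) ∧
    (∃ m : ℤ,
      (∀ s₁ s₂ : ℤ, max (a - r + 1) 0 ≤ s₁ → s₁ ≤ s₂ → s₂ ≤ min a (d - r) →
        s₂ ≤ m → Aval q ε d r s₁ a ≤ Aval q ε d r s₂ a) ∧
      (∀ s₁ s₂ : ℤ, max (a - r + 1) 0 ≤ s₁ → s₁ ≤ s₂ → s₂ ≤ min a (d - r) →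
        m ≤ s₁ → Aval q ε d r s₂ a ≤ Aval q ε d r s₁ a)) := by
  have hε02 : 0 ≤ ε ∧ ε ≤ 2 := by
    rcases hε with h|h|h|h|h <;> simp_all <;> norm_num
  obtain ⟨hε0, hε2⟩ := hε02
  obtain ⟨k, hk⟩ : ∃ k : ℤ, (k : ℝ) = 2 * ε := by
    rcases hε with h|h|h|h|h
    · exact ⟨0, by rw [h]; norm_num⟩
    · exact ⟨1, by rw [h]; norm_num⟩
    · exact ⟨2, by rw [h]; norm_num⟩
    · exact ⟨3, by rw [h]; norm_num⟩
    · exact ⟨4, by rw [h]; norm_num⟩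
  set lo := max (a - r + 1) 0 with hlo_def
  set hi := min a (d - r) with hhi_def
  have hstep : ∀ s : ℤ, lo ≤ s → s ≤ hi - 1 →
      ((1 / 2 : ℝ) ≤ 2 * (s : ℝ) + ε - (a : ℝ) →
        Aval q ε d r (s + 1) a < Aval q ε d r s a) ∧
      (2 * (s : ℝ) + ε - (a : ℝ) ≤ -(1 / 2 : ℝ) →
        Aval q ε d r s a < Aval q ε d r (s + 1) a) := by
    intro s h1 h2
    exact stmt_step hq hε0 hε2 (by omega) (by omega) (by omega) (by omega)
  refine ⟨hstep, ?_⟩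
  have htri1 : ∀ s : ℤ, ¬ ((1 / 2 : ℝ) ≤ 2 * (s : ℝ) + ε - (a : ℝ)) →
      2 * (s : ℝ) + ε - (a : ℝ) ≤ 0 := by
    intro s h
    push_neg at h
    have h1 : ((4*s - 2*a + k : ℤ) : ℝ) < 1 := by push_cast; linarith
    have h2 : (4*s - 2*a + k : ℤ) ≤ 0 := by
      have : (4*s - 2*a + k : ℤ) < 1 := by exact_mod_cast h1
      omega
    have h3 : ((4*s - 2*a + k : ℤ) : ℝ) ≤ 0 := by exact_mod_cast h2
    push_cast at h3
    linarith
  have htri2 : ∀ s : ℤ, ¬ (2 * (s : ℝ) + ε - (a : ℝ) ≤ -(1 / 2 : ℝ)) →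
      0 ≤ 2 * (s : ℝ) + ε - (a : ℝ) := by
    intro s h
    push_neg at h
    have h1 : (-1 : ℝ) < ((4*s - 2*a + k : ℤ) : ℝ) := by push_cast; linarith
    have h2 : (0:ℤ) ≤ 4*s - 2*a + k := by
      have : (-1:ℤ) < 4*s - 2*a + k := by exact_mod_cast h1
      omega
    have h3 : (0:ℝ) ≤ ((4*s - 2*a + k : ℤ) : ℝ) := by exact_mod_cast h2
    push_cast at h3
    linarith
  by_cases hne : lo ≤ hi
  case neg =>
    exact ⟨lo, fun s₁ s₂ a1 a2 a3 _ => absurd (le_trans (le_trans a1 a2) a3) hne,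
           fun s₁ s₂ a1 a2 a3 _ => absurd (le_trans (le_trans a1 a2) a3) hne⟩
  case pos =>
  obtain ⟨m, hm_mem, hm_max⟩ := Finset.exists_max_image (Finset.Icc lo hi)
    (fun s => Aval q ε d r s a) ⟨lo, Finset.mem_Icc.mpr ⟨le_refl lo, hne⟩⟩
  rw [Finset.mem_Icc] at hm_mem
  have hmax : ∀ s : ℤ, lo ≤ s → s ≤ hi → Aval q ε d r s a ≤ Aval q ε d r m a := by
    intro s h1 h2
    exact hm_max s (Finset.mem_Icc.mpr ⟨h1, h2⟩)
  have stepUp : ∀ s : ℤ, lo ≤ s → s ≤ hi - 1 → s + 1 ≤ m →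
      Aval q ε d r s a ≤ Aval q ε d r (s+1) a := by
    intro s h1 h2 h3
    by_contra hcon
    push_neg at hcon
    have hnc : ¬ (2 * (s : ℝ) + ε - (a : ℝ) ≤ -(1 / 2 : ℝ)) := by
      intro h
      exact absurd ((hstep s h1 h2).2 h) (not_lt.mpr hcon.le)
    have h0 := htri2 s hnc
    have hd1 : Aval q ε d r m a ≤ Aval q ε d r (s+1) a := by
      refine chain_down (f := fun t => Aval q ε d r t a) (lo := s+1) (hi := hi) ?_ (s+1) m (le_refl _) h3 hm_mem.2
      intro t ht1 ht2
      have hcast : (s:ℝ) + 1 ≤ (t:ℝ) := by exact_mod_cast ht1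
      exact ((hstep t (by omega) (by omega)).1 (by linarith)).le
    have hd2 := hmax s h1 (by omega)
    linarith
  have stepDown : ∀ s : ℤ, lo ≤ s → s ≤ hi - 1 → m ≤ s →
      Aval q ε d r (s+1) a ≤ Aval q ε d r s a := by
    intro s h1 h2 h3
    by_contra hcon
    push_neg at hcon
    have hnc : ¬ ((1 / 2 : ℝ) ≤ 2 * (s : ℝ) + ε - (a : ℝ)) := by
      intro h
      exact absurd ((hstep s h1 h2).1 h) (not_lt.mpr hcon.le)
    have h0 := htri1 s hnc
    have hd1 : Aval q ε d r m a ≤ Aval q ε d r s a := by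
      refine chain_up (f := fun t => Aval q ε d r t a) (lo := lo) (hi := s) ?_ m s hm_mem.1 h3 (le_refl _)
      intro t ht1 ht2
      have hcast : (t:ℝ) + 1 ≤ (s:ℝ) := by exact_mod_cast ht2
      exact ((hstep t (by omega) (by omega)).2 (by linarith)).le
    have hd2 := hmax (s+1) (by omega) (by omega)
    linarith
  refine ⟨m, ?_, ?_⟩
  · intro s₁ s₂ h1 h2 h3 h4
    refine chain_up (f := fun t => Aval q ε d r t a) (lo := lo) (hi := min hi m) ?_ s₁ s₂ h1 h2 (by omega)
    intro t ht1 ht2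
    exact stepUp t ht1 (by omega) (by omega)
  · intro s₁ s₂ h1 h2 h3 h4
    refine chain_down (f := fun t => Aval q ε d r t a) (lo := m) (hi := hi) ?_ s₁ s₂ h4 h2 h3
    intro t ht1 ht2
    exact stepDown t (by omega) (by omega) ht1
end
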